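/- For all integers p ≥ 1, K ≥ p and N ≥ 2, p·a₀(K,p)² > p·a₀(K·N,p)²; in other words, the intrinsic bias of the sample Fréchet mean of N i.i.d. complex Wishart covariance estimates (which equals p·a₀(K,p)²) strictly exceeds the intrinsic bias of their simple sample mean (which equals p·a₀(K·N,p)²). -/

import Mathlib

/-! `a₀(·, p)` is negative and strictly increasing on `[p, ∞)`, so `a₀(K, p)² > a₀(KN, p)²`.
Negativity is `ψ(n) < log n`, i.e. `H_{n-1} - log n < γ`. Monotonicity is termwise: raising `K`
by one raises each `ψ(K+1-j)` by `1/(K+1-j) ≥ 1/K`, but raises `log K` by less than `1/K`. -/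

/-- The `m`-th harmonic number `H_m = ∑_{i=1}^m 1/i` (with `H_0 = 0`), as a real number. -/
noncomputable def harmonicR (m : ℕ) : ℝ := ∑ i ∈ Finset.range m, (1 : ℝ) / (i + 1)

/-- The digamma function at a positive integer `n`: `ψ(n) = H_{n-1} - γ`. -/
noncomputable def digammaNat (n : ℕ) : ℝ := harmonicR (n - 1) - Real.eulerMascheroniConstant

/-- `a₀(K, p) = (1/p) ∑_{j=1}^p ψ(K+1-j) - log K`. -/
noncomputable def a0 (K p : ℕ) : ℝ :=
  (1 / (p : ℝ)) * ∑ j ∈ Finset.Icc 1 p, digammaNat (K + 1 - j) - Real.log K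

open Real Finset

lemma Real.log_add_one_sub_log_lt_inv {x : ℝ} (hx : 0 < x) : log (x + 1) - log x < x⁻¹ := by
  rw [← log_div (by positivity) hx.ne']
  calc log ((x + 1) / x) < (x + 1) / x - 1 :=
        log_lt_sub_one_of_pos (by positivity) (by rw [Ne, div_eq_one_iff_eq hx.ne']; linarith)
    _ = x⁻¹ := by field_simp; ring

lemma harmonicR_eq_harmonic (m : ℕ) : harmonicR m = (harmonic m : ℝ) := by
  simp [harmonicR, harmonic, one_div]

lemma harmonicR_mono : Monotone harmonicR := fun _ _ h =>
  sum_le_sum_of_subset_of_nonneg (range_subset_range.2 h) fun _ _ _ => by positivity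

lemma digammaNat_mono : Monotone digammaNat := fun _ _ h =>
  sub_le_sub_right (harmonicR_mono (Nat.sub_le_sub_right h 1)) _

lemma digammaNat_add_one {n : ℕ} (hn : n ≠ 0) : digammaNat (n + 1) = digammaNat n + (n : ℝ)⁻¹ := by
  obtain ⟨m, rfl⟩ := Nat.exists_eq_succ_of_ne_zero hn
  simp only [digammaNat, harmonicR, Nat.succ_sub_one, sum_range_succ]
  push_cast
  ring

lemma digammaNat_lt_log {n : ℕ} (hn : n ≠ 0) : digammaNat n < log n := by
  have h := eulerMascheroniSeq_lt_eulerMascheroniConstant (n - 1)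
  rw [eulerMascheroniSeq, ← harmonicR_eq_harmonic, Nat.cast_pred (Nat.pos_of_ne_zero hn),
    sub_add_cancel] at h
  rw [digammaNat]
  linarith

lemma a0_eq_sum_div {p : ℕ} (hp : p ≠ 0) (K : ℕ) :
    a0 K p = (∑ j ∈ Icc 1 p, (digammaNat (K + 1 - j) - log K)) / p := by
  rw [a0, sum_sub_distrib, sum_const, Nat.card_Icc, Nat.add_sub_cancel, nsmul_eq_mul]
  field_simp

lemma a0_neg {K p : ℕ} (hp : 0 < p) (hK : 0 < K) : a0 K p < 0 := by
  rw [a0_eq_sum_div hp.ne']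
  refine div_neg_of_neg_of_pos (sum_neg (fun j hj => ?_) ⟨1, by simp; omega⟩) (by positivity)
  have hj := (mem_Icc.1 hj).1
  linarith [digammaNat_mono (show K + 1 - j ≤ K by omega), digammaNat_lt_log hK.ne']

lemma a0_lt_a0_add_one {K p : ℕ} (hp : 0 < p) (hK : p ≤ K) : a0 K p < a0 (K + 1) p := by
  rw [a0_eq_sum_div hp.ne', a0_eq_sum_div hp.ne']
  refine div_lt_div_of_pos_right (sum_lt_sum_of_nonempty ⟨1, by simp; omega⟩ fun j hj => ?_)
    (by positivity)
  obtain ⟨hj1, hjp⟩ := mem_Icc.1 hj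
  have hshift : K + 1 + 1 - j = (K + 1 - j) + 1 := by omega
  have hinv : (K : ℝ)⁻¹ ≤ ((K + 1 - j : ℕ) : ℝ)⁻¹ :=
    inv_anti₀ (by norm_cast; omega) (by norm_cast; omega)
  have hlog := log_add_one_sub_log_lt_inv (show (0 : ℝ) < K by norm_cast; omega)
  rw [hshift, digammaNat_add_one (by omega)]
  push_cast
  linarith

lemma a0_strictMonoOn {p : ℕ} (hp : 0 < p) : StrictMonoOn (a0 · p) (Set.Ici p) :=
  strictMonoOn_of_lt_add_one Set.ordConnected_Ici fun _ _ hK _ => a0_lt_a0_add_one hp hK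

/-- For all integers `p ≥ 1`, `K ≥ p` and `N ≥ 2`, the intrinsic bias `p·a₀(K,p)²` of the
sample Fréchet mean strictly exceeds the intrinsic bias `p·a₀(K·N,p)²` of the sample mean. -/
theorem ibias_frechet_gt_ibias_mean (p K N : ℕ) (hp : 1 ≤ p) (hK : p ≤ K) (hN : 2 ≤ N) :
    (p : ℝ) * (a0 K p) ^ 2 > (p : ℝ) * (a0 (K * N) p) ^ 2 := by
  have hKN : K < K * N := lt_mul_of_one_lt_right (by omega) hN
  have hlt : a0 K p < a0 (K * N) p := a0_strictMonoOn hp hK (hK.trans hKN.le) hKN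
  have hneg : a0 (K * N) p < 0 := a0_neg hp (by omega)
  have hsq : a0 (K * N) p ^ 2 < a0 K p ^ 2 := by nlinarith
  exact mul_lt_mul_of_pos_left hsq (by exact_mod_cast hp)
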